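/- arXiv:1202.4701 — 3 statements merged into one kernel-verified Lean document; each statement's English description precedes it below -/
import Mathlib

section
/- Let G be a directed bipartite graph with parts X and Y, with no directed cycle of length two, and with every vertex having out-degree at least two. If G has exactly eight vertices, then |X| = 4 and |Y| = 4. -/
/-- A directed bipartite graph (parts `X`, `Y`) with no directed 2-cycle and
out-degree at least two at every vertex which has exactly eight vertices
must have four vertices in each part. -/
theorem stmt1 {V : Type*} [Fintype V] [DecidableEq V]
    (A : V → V → Prop) [DecidableRel A] (X Y : Finset V)
    (hpart : ∀ v, (v ∈ X ∧ v ∉ Y) ∨ (v ∈ Y ∧ v ∉ X))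
    (hbip : ∀ u v, A u v → (u ∈ X ∧ v ∈ Y) ∨ (u ∈ Y ∧ v ∈ X))
    (hno2 : ∀ u v, A u v → ¬ A v u)
    (hout : ∀ v, 2 ≤ (Finset.univ.filter (fun w => A v w)).card)
    (hcard : Fintype.card V = 8) :
    X.card = 4 ∧ Y.card = 4 := by
  classical
  have hdisj : Disjoint X Y := by
    rw [Finset.disjoint_left]
    intro v hvX hvY
    rcases hpart v with ⟨_, h⟩ | ⟨_, h⟩ <;> exact h ‹_›
  have hunion : X ∪ Y = Finset.univ := by
    ext v
    simp only [Finset.mem_union, Finset.mem_univ, iff_true]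
    rcases hpart v with ⟨h, _⟩ | ⟨h, _⟩
    · exact Or.inl h
    · exact Or.inr h
  have hsum : X.card + Y.card = 8 := by
    rw [← Finset.card_union_of_disjoint hdisj, hunion, ← hcard]
    rfl
  set S : Finset (V × V) := Finset.univ.filter (fun p => A p.1 p.2) with hS
  have hScard : S.card = ∑ v, (Finset.univ.filter (fun w => A v w)).card := by
    rw [hS, Finset.card_filter, ← Finset.univ_product_univ, Finset.sum_product]
    congr 1
    ext v
    rw [Finset.card_filter]
  have h16 : 16 ≤ S.card := by
    rw [hScard]
    calc (16 : ℕ) = ∑ _v : V, 2 := by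
          rw [Finset.sum_const, Finset.card_univ, hcard]; rfl
      _ ≤ _ := Finset.sum_le_sum (fun v _ => hout v)
  have hle : S.card ≤ (X ×ˢ Y).card := by
    apply Finset.card_le_card_of_injOn (fun p => if p.1 ∈ X then p else p.swap)
    · intro p hp
      rw [hS, Finset.mem_coe, Finset.mem_filter] at hp
      rcases hbip p.1 p.2 hp.2 with ⟨h1, h2⟩ | ⟨h1, h2⟩
      · simp [h1, Finset.mem_product, h2]
      · have hnx : p.1 ∉ X := by
          rcases hpart p.1 with ⟨_, h⟩ | ⟨_, h⟩
          · exact absurd h1 h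
          · exact h
        simp [hnx, Finset.mem_product, h1, h2]
    · intro p hp q hq heq
      simp only [Finset.mem_coe, hS, Finset.mem_filter] at hp hq
      by_cases hpX : p.1 ∈ X <;> by_cases hqX : q.1 ∈ X <;>
        simp only [hpX, hqX, if_pos, if_neg, if_true, if_false] at heq
      · exact heq
      · exfalso
        have h1 : p.1 = q.2 := by rw [heq]; rfl
        have h2 : p.2 = q.1 := by rw [heq]; rfl
        exact hno2 q.1 q.2 hq.2 (by rw [← h1, ← h2]; exact hp.2)
      · exfalso
        have h1 : p.2 = q.1 := by rw [← heq]; rfl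
        have h2 : p.1 = q.2 := by rw [← heq]; rfl
        exact hno2 q.1 q.2 hq.2 (by rw [← h1, ← h2]; exact hp.2)
      · exact Prod.swap_injective heq
  rw [Finset.card_product] at hle
  have hprod : 16 ≤ X.card * Y.card := le_trans h16 hle
  have ha : X.card ≤ 8 := by omega
  set a := X.card with hA
  interval_cases a <;> omega
end

section
/- Let G be a directed bipartite graph with parts X and Y, with no directed 2-cycle and every vertex of out-degree at least two. If |X| = 3, then every vertex of Y has in-degree at most one, and consequently |Y| ≥ 6. -/
/-- In a directed bipartite graph (parts `X`, `Y`) with no directed 2-cycle and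
out-degree at least two at every vertex, if `|X| = 3` then every vertex of `Y`
has in-degree at most one, and consequently `|Y| ≥ 6`. -/
theorem stmt3 {V : Type*} [Fintype V] [DecidableEq V]
    (A : V → V → Prop) [DecidableRel A] (X Y : Finset V)
    (hpart : ∀ v, (v ∈ X ∧ v ∉ Y) ∨ (v ∈ Y ∧ v ∉ X))
    (hbip : ∀ u v, A u v → (u ∈ X ∧ v ∈ Y) ∨ (u ∈ Y ∧ v ∈ X))
    (hno2 : ∀ u v, A u v → ¬ A v u)
    (hout : ∀ v, 2 ≤ (Finset.univ.filter (fun w => A v w)).card)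
    (hX : X.card = 3) :
    (∀ y ∈ Y, (Finset.univ.filter (fun u => A u y)).card ≤ 1) ∧ 6 ≤ Y.card := by
  have hnotboth : ∀ v, v ∈ Y → v ∉ X := by
    intro v hv
    rcases hpart v with ⟨h1, h2⟩ | ⟨h1, h2⟩
    · exact absurd hv h2
    · exact h2
  have hin : ∀ y ∈ Y, (Finset.univ.filter (fun u => A u y)).card ≤ 1 := by
    intro y hy
    by_contra h
    push_neg at h
    obtain ⟨u, hu, v, hv, huv⟩ := Finset.one_lt_card.mp h
    simp only [Finset.mem_filter, Finset.mem_univ, true_and] at hu hv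
    have huX : u ∈ X := by
      rcases hbip u y hu with ⟨h1, _⟩ | ⟨_, h2⟩
      · exact h1
      · exact absurd h2 (hnotboth y hy)
    have hvX : v ∈ X := by
      rcases hbip v y hv with ⟨h1, _⟩ | ⟨_, h2⟩
      · exact h1
      · exact absurd h2 (hnotboth y hy)
    obtain ⟨a, ha, b, hb, hab⟩ := Finset.one_lt_card.mp (lt_of_lt_of_le one_lt_two (hout y))
    simp only [Finset.mem_filter, Finset.mem_univ, true_and] at ha hb
    have haX : a ∈ X := by
      rcases hbip y a ha with ⟨h1, _⟩ | ⟨_, h2⟩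
      · exact absurd h1 (hnotboth y hy)
      · exact h2
    have hbX : b ∈ X := by
      rcases hbip y b hb with ⟨h1, _⟩ | ⟨_, h2⟩
      · exact absurd h1 (hnotboth y hy)
      · exact h2
    have hau : a ≠ u := fun e => hno2 u y hu (e ▸ ha)
    have hav : a ≠ v := fun e => hno2 v y hv (e ▸ ha)
    have hbu : b ≠ u := fun e => hno2 u y hu (e ▸ hb)
    have hbv : b ≠ v := fun e => hno2 v y hv (e ▸ hb)
    have hsub : ({a, b, u, v} : Finset V) ⊆ X := by
      intro z hz
      simp only [Finset.mem_insert, Finset.mem_singleton] at hz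
      rcases hz with rfl | rfl | rfl | rfl <;> assumption
    have hcard : ({a, b, u, v} : Finset V).card = 4 := by
      rw [Finset.card_insert_of_notMem (by simp [hab, hau, hav]),
        Finset.card_insert_of_notMem (by simp [hbu, hbv]),
        Finset.card_insert_of_notMem (by simp [huv]), Finset.card_singleton]
    have := Finset.card_le_card hsub
    omega
  refine ⟨hin, ?_⟩
  set N : V → Finset V := fun x => Finset.univ.filter (fun w => A x w) with hN
  have hNY : ∀ x ∈ X, N x ⊆ Y := by
    intro x hx w hw
    simp only [hN, Finset.mem_filter, Finset.mem_univ, true_and] at hw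
    rcases hbip x w hw with ⟨_, h2⟩ | ⟨h1, _⟩
    · exact h2
    · exact absurd hx (hnotboth x h1)
  have hdisj : ∀ x₁ ∈ X, ∀ x₂ ∈ X, x₁ ≠ x₂ → Disjoint (N x₁) (N x₂) := by
    intro x₁ hx₁ x₂ hx₂ hne
    rw [Finset.disjoint_left]
    intro w hw1 hw2
    simp only [hN, Finset.mem_filter, Finset.mem_univ, true_and] at hw1 hw2
    have hwY : w ∈ Y := hNY x₁ hx₁ (by simp [hN, hw1])
    have := hin w hwY
    have h2 : 1 < (Finset.univ.filter (fun u => A u w)).card :=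
      Finset.one_lt_card.mpr ⟨x₁, by simp [hw1], x₂, by simp [hw2], hne⟩
    omega
  have hsub : X.biUnion N ⊆ Y := by
    intro w hw
    obtain ⟨x, hx, hxw⟩ := Finset.mem_biUnion.mp hw
    exact hNY x hx hxw
  have hle : X.card * 2 ≤ ∑ x ∈ X, (N x).card :=
    Finset.card_nsmul_le_sum X _ 2 (fun x _ => hout x)
  have hbu : (X.biUnion N).card = ∑ x ∈ X, (N x).card := Finset.card_biUnion hdisj
  have := Finset.card_le_card hsub
  omega
end

section
/- For integers d ≥ 3, q ≥ 1, m = dq, and i ∈ Z/mZ, let c = (cos(2π(i+1/2)/m), sin(2π(i+1/2)/m), 0, 0) ∈ S³. Then for every (a, b) ∈ (Z/mZ)² with a ≡ b (mod q), the point f(a,b) = (1/√2)(cos(2πa/m), sin(2πa/m), cos(2πb/m), sin(2πb/m)) satisfies ⟨c, f(a,b)⟩ ≤ (1/√2)cos(π/m), with equality if and only if a ∈ {i, i+1}. Consequently, the set {f(i,j), f(i+1,j+1) : j ≡ i (mod q)} is the vertex set of a face of the polytope conv{f(a,b) : a ≡ b (mod q)}. -/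
noncomputable section

open Real

/-- The point of `ℝ⁴` (as Euclidean space) with the given four coordinates. -/
def pt (x y z w : ℝ) : EuclideanSpace ℝ (Fin 4) :=
  (WithLp.equiv 2 (Fin 4 → ℝ)).symm ![x, y, z, w]

/-- The parametrization of the standard torus of `S³` on `(ℤ/mℤ)²`:
`f(a,b) = (1/√2)(cos(2πa/m), sin(2πa/m), cos(2πb/m), sin(2πb/m))`. -/
def fpt (m : ℕ) (a b : ZMod m) : EuclideanSpace ℝ (Fin 4) :=
  pt ((1 / Real.sqrt 2) * Real.cos (2 * π * a.val / m))
     ((1 / Real.sqrt 2) * Real.sin (2 * π * a.val / m))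
     ((1 / Real.sqrt 2) * Real.cos (2 * π * b.val / m))
     ((1 / Real.sqrt 2) * Real.sin (2 * π * b.val / m))

lemma key_cos (m t : ℕ) (hm : 0 < m) (ht : t < m) :
    cos ((2*(t:ℝ)-1)*π/m) ≤ cos (π/m) ∧
      (cos ((2*(t:ℝ)-1)*π/m) = cos (π/m) ↔ t = 0 ∨ t = 1) := by
  have hmR : (0:ℝ) < m := by exact_mod_cast hm
  match t, ht with
  | 0, _ =>
    have : (2*((0:ℕ):ℝ)-1)*π/m = -(π/m) := by push_cast; ring
    rw [this, Real.cos_neg]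
    simp
  | 1, _ =>
    have : (2*((1:ℕ):ℝ)-1)*π/m = π/m := by push_cast; ring
    rw [this]
    simp
  | (k+2), ht =>
    set t : ℕ := k + 2 with htdef
    have h2t : 2 ≤ t := by omega
    have h2tR : (2:ℝ) ≤ t := by exact_mod_cast h2t
    have htR : (t:ℝ) < m := by exact_mod_cast ht
    have hs1 : 0 < Real.sin ((t:ℝ)*π/m) := by
      apply Real.sin_pos_of_pos_of_lt_pi
      · positivity
      · rw [div_lt_iff₀ hmR]
        nlinarith [Real.pi_pos]
    have hs2 : 0 < Real.sin (((t:ℝ)-1)*π/m) := by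
      apply Real.sin_pos_of_pos_of_lt_pi
      · have h1 : (0:ℝ) < (t:ℝ)-1 := by linarith
        positivity
      · rw [div_lt_iff₀ hmR]
        nlinarith [Real.pi_pos]
    have hlt : cos ((2*(t:ℝ)-1)*π/m) < cos (π/m) := by
      have h := Real.cos_sub_cos ((2*(t:ℝ)-1)*π/m) (π/m)
      have e1 : ((2*(t:ℝ)-1)*π/m + π/m)/2 = (t:ℝ)*π/m := by field_simp; ring
      have e2 : ((2*(t:ℝ)-1)*π/m - π/m)/2 = ((t:ℝ)-1)*π/m := by field_simp; ring
      rw [e1, e2] at h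
      nlinarith
    refine ⟨le_of_lt hlt, ?_, ?_⟩
    · intro h; exact absurd h (ne_of_lt hlt)
    · rintro (h | h) <;> omega

lemma key2 (m : ℕ) [NeZero m] (hm3 : 3 ≤ m) (i a : ZMod m) :
    cos (2*π*((i.val:ℝ)+1/2)/m - 2*π*(a.val:ℝ)/m) ≤ cos (π/m) ∧
    (cos (2*π*((i.val:ℝ)+1/2)/m - 2*π*(a.val:ℝ)/m) = cos (π/m) ↔ a = i ∨ a = i + 1) := by
  haveI : Fact (1 < m) := ⟨by omega⟩
  have hm0 : 0 < m := by omega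
  set t : ℕ := (a - i).val with htdef
  have ht : t < m := ZMod.val_lt _
  have h1 : ((i.val + t : ℕ) : ZMod m) = ((a.val : ℕ) : ZMod m) := by
    push_cast
    rw [ZMod.natCast_val, ZMod.natCast_val, ZMod.natCast_val, ZMod.cast_id, ZMod.cast_id,
      ZMod.cast_id]
    ring
  have h2 : (m:ℤ) ∣ (a.val : ℤ) - (i.val + t : ℕ) := ((ZMod.natCast_eq_natCast_iff _ _ _).1 h1).dvd
  obtain ⟨k, hk⟩ := h2
  have hkR : (a.val : ℝ) = (i.val:ℝ) + t + m*k := by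
    have hZ : (a.val : ℤ) = (i.val:ℤ) + t + m*k := by push_cast at hk; linarith
    exact_mod_cast hZ
  have hmR : (0:ℝ) < m := by exact_mod_cast hm0
  have hang : 2*π*((i.val:ℝ)+1/2)/m - 2*π*(a.val:ℝ)/m = -((2*(t:ℝ)-1)*π/m) - k*(2*π) := by
    rw [hkR]; field_simp; ring
  have hcos : cos (2*π*((i.val:ℝ)+1/2)/m - 2*π*(a.val:ℝ)/m) = cos ((2*(t:ℝ)-1)*π/m) := by
    rw [hang, Real.cos_sub_int_mul_two_pi, Real.cos_neg]
  obtain ⟨hle, hiff⟩ := key_cos m t hm0 ht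
  rw [hcos]
  refine ⟨hle, hiff.trans ?_⟩
  constructor
  · rintro (h | h)
    · left
      have h0 : a - i = 0 := by rw [← ZMod.val_eq_zero, ← htdef, h]
      exact sub_eq_zero.1 h0
    · right
      have hcast : ((t : ℕ) : ZMod m) = a - i := by rw [htdef, ZMod.natCast_val, ZMod.cast_id]
      rw [h] at hcast
      have h1' : a - i = 1 := by simpa using hcast.symm
      have := sub_eq_iff_eq_add.1 h1'
      rw [this]; ring
  · rintro (h | h)
    · left
      rw [htdef, h, sub_self, ZMod.val_zero]
    · right
      rw [htdef, h]
      have : i + 1 - i = 1 := by ring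
      rw [this, ZMod.val_one]

lemma face_subset {E : Type*} [NormedAddCommGroup E] [InnerProductSpace ℝ E]
    (l : E →L[ℝ] ℝ) (S : Set E) (M : ℝ) (hS : ∀ s ∈ S, l s ≤ M) :
    {x ∈ convexHull ℝ S | l x = M} ⊆ convexHull ℝ {s ∈ S | l s = M} := by
  rintro x ⟨hx, hlx⟩
  rw [_root_.convexHull_eq] at hx
  obtain ⟨ι, t, w, z, hw0, hw1, hzS, hxc⟩ := hx
  have hlsum : ∑ j ∈ t, w j * l (z j) = M := by
    rw [← hlx, ← hxc, Finset.centerMass_eq_of_sum_1 _ _ hw1, map_sum]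
    simp
  have hzero : ∀ j ∈ t, w j * (M - l (z j)) = 0 := by
    rw [← Finset.sum_eq_zero_iff_of_nonneg]
    · have : ∑ j ∈ t, w j * (M - l (z j)) = (∑ j ∈ t, w j) * M - ∑ j ∈ t, w j * l (z j) := by
        rw [Finset.sum_mul]
        rw [← Finset.sum_sub_distrib]
        congr 1; ext j; ring
      rw [this, hw1, hlsum]; ring
    · intro j hj
      have := hS (z j) (hzS j hj)
      have := hw0 j hj
      nlinarith
  rw [← hxc, ← Finset.centerMass_filter_ne_zero]
  apply Finset.centerMass_mem_convexHull
  · intro j hj; exact hw0 j (Finset.mem_filter.1 hj).1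
  · rw [Finset.sum_filter_ne_zero, hw1]; norm_num
  · intro j hj
    rw [Finset.mem_filter] at hj
    refine ⟨hzS j hj.1, ?_⟩
    have h0 := hzero j hj.1
    rcases mul_eq_zero.1 h0 with h | h
    · exact absurd h hj.2
    · linarith

/-- For `d ≥ 3`, `q ≥ 1`, `m = dq` and `i ∈ ℤ/mℤ`, with
`c = (cos(2π(i+1/2)/m), sin(2π(i+1/2)/m), 0, 0)`: every vertex `f(a,b)` (with
`a ≡ b (mod q)`) satisfies `⟪c, f(a,b)⟫ ≤ (1/√2)cos(π/m)`, with equality iff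
`a ∈ {i, i+1}`; consequently `{f(i,j), f(i+1,j+1) : j ≡ i (mod q)}` spans a
face of the polytope `conv {f(a,b) : a ≡ b (mod q)}`. -/
theorem stmt18 (d q : ℕ) (hd : 3 ≤ d) (hq : 1 ≤ q) (m : ℕ) [NeZero m] (hm : m = d * q)
    (i : ZMod m) (c : EuclideanSpace ℝ (Fin 4))
    (hc : c = pt (Real.cos (2 * π * ((i.val : ℝ) + 1 / 2) / m))
                 (Real.sin (2 * π * ((i.val : ℝ) + 1 / 2) / m)) 0 0)
    (P : Set (EuclideanSpace ℝ (Fin 4)))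
    (hP : P = convexHull ℝ {x | ∃ a b : ZMod m, q ∣ (a - b).val ∧ x = fpt m a b}) :
    (∀ a b : ZMod m, q ∣ (a - b).val →
      (inner ℝ c (fpt m a b) : ℝ) ≤ (1 / Real.sqrt 2) * Real.cos (π / m) ∧
      ((inner ℝ c (fpt m a b) : ℝ) = (1 / Real.sqrt 2) * Real.cos (π / m) ↔
        a = i ∨ a = i + 1)) ∧
    IsExposed ℝ P (convexHull ℝ
      {x | ∃ j : ZMod m, q ∣ (i - j).val ∧ (x = fpt m i j ∨ x = fpt m (i + 1) (j + 1))}) := by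
  have hm3 : 3 ≤ m := by
    rw [hm]; calc 3 ≤ d := hd
      _ = d * 1 := (mul_one d).symm
      _ ≤ d * q := Nat.mul_le_mul_left d hq
  have hs2 : (0:ℝ) < 1 / Real.sqrt 2 := by positivity
  set M : ℝ := (1 / Real.sqrt 2) * Real.cos (π / m) with hM
  -- inner product formula
  have hinner : ∀ a b : ZMod m, (inner ℝ c (fpt m a b) : ℝ) =
      (1 / Real.sqrt 2) * cos (2*π*((i.val:ℝ)+1/2)/m - 2*π*((a:ZMod m).val:ℝ)/m) := by
    intro a b
    rw [hc]
    simp only [pt, fpt, PiLp.inner_apply, RCLike.inner_apply, WithLp.equiv_symm_apply, WithLp.ofLp_toLp,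
      Fin.sum_univ_four, Matrix.cons_val_zero, Matrix.cons_val_one, Matrix.head_cons,
      Matrix.cons_val_two, Matrix.tail_cons, Matrix.cons_val_three, starRingEnd_apply, star_trivial]
    rw [Real.cos_sub]
    ring
  -- main pointwise statement
  have hmain : ∀ a b : ZMod m, (inner ℝ c (fpt m a b) : ℝ) ≤ M ∧
      ((inner ℝ c (fpt m a b) : ℝ) = M ↔ a = i ∨ a = i + 1) := by
    intro a b
    obtain ⟨hle, hiff⟩ := key2 m hm3 i a
    rw [hinner a b]
    constructor
    · exact mul_le_mul_of_nonneg_left hle (le_of_lt hs2)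
    · rw [hM]
      constructor
      · intro h
        exact hiff.1 (mul_left_cancel₀ (ne_of_gt hs2) h)
      · intro h
        rw [hiff.2 h]
  refine ⟨fun a b _ => hmain a b, ?_⟩
  -- the exposed face
  set S : Set (EuclideanSpace ℝ (Fin 4)) :=
    {x | ∃ a b : ZMod m, q ∣ (a - b).val ∧ x = fpt m a b} with hS
  set T : Set (EuclideanSpace ℝ (Fin 4)) :=
    {x | ∃ j : ZMod m, q ∣ (i - j).val ∧ (x = fpt m i j ∨ x = fpt m (i + 1) (j + 1))} with hT
  intro _
  refine ⟨innerSL ℝ c, ?_⟩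
  have hlapp : ∀ y, (innerSL ℝ c) y = (inner ℝ c y : ℝ) := fun y => rfl
  -- linearity of the functional as IsLinearMap
  have hlin : IsLinearMap ℝ (fun y : EuclideanSpace ℝ (Fin 4) => (inner ℝ c y : ℝ)) :=
    ⟨fun x y => inner_add_right _ _ _, fun r x => real_inner_smul_right _ _ _⟩
  -- every point of S has value ≤ M
  have hSle : ∀ s ∈ S, (inner ℝ c s : ℝ) ≤ M := by
    rintro s ⟨a, b, -, rfl⟩
    exact (hmain a b).1
  -- every point of P has value ≤ M
  have hPle : ∀ y ∈ P, (inner ℝ c y : ℝ) ≤ M := by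
    rw [hP]
    intro y hy
    have hsub : convexHull ℝ S ⊆ {y | (inner ℝ c y : ℝ) ≤ M} :=
      convexHull_min hSle (convex_halfSpace_le hlin M)
    exact hsub hy
  -- the maximum is attained at fpt m i i
  have hiiS : fpt m i i ∈ S := ⟨i, i, by simp, rfl⟩
  have hiiM : (inner ℝ c (fpt m i i) : ℝ) = M := (hmain i i).2.2 (Or.inl rfl)
  have hiiP : fpt m i i ∈ P := by rw [hP]; exact subset_convexHull ℝ S hiiS
  -- T is exactly the set of points of S with value M
  have hTS : T = {s ∈ S | (inner ℝ c s : ℝ) = M} := by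
    ext x
    constructor
    · rintro ⟨j, hj, rfl | rfl⟩
      · exact ⟨⟨i, j, hj, rfl⟩, (hmain i j).2.2 (Or.inl rfl)⟩
      · refine ⟨⟨i + 1, j + 1, ?_, rfl⟩, (hmain (i+1) (j+1)).2.2 (Or.inr rfl)⟩
        have : i + 1 - (j + 1) = i - j := by ring
        rw [this]; exact hj
    · rintro ⟨⟨a, b, hab, rfl⟩, hval⟩
      rcases (hmain a b).2.1 hval with rfl | rfl
      · exact ⟨b, hab, Or.inl rfl⟩
      · refine ⟨b - 1, ?_, Or.inr ?_⟩
        · have : i - (b - 1) = i + 1 - b := by ring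
          rw [this]; exact hab
        · rw [sub_add_cancel]
  -- conclude
  have hTP : convexHull ℝ T = {x ∈ convexHull ℝ S | (inner ℝ c x : ℝ) = M} := by
    apply Set.Subset.antisymm
    · apply convexHull_min
      · rintro x hx
        rw [hTS] at hx
        exact ⟨subset_convexHull ℝ S hx.1, hx.2⟩
      · exact (convex_convexHull ℝ S).inter (convex_hyperplane hlin M)
    · intro x hx
      have h2 := face_subset (innerSL ℝ c) S M hSle ⟨hx.1, hx.2⟩
      rw [hTS]
      exact h2
  show convexHull ℝ T = {x ∈ P | ∀ y ∈ P, (inner ℝ c y : ℝ) ≤ inner ℝ c x}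
  rw [hTP, hP]
  ext x
  constructor
  · rintro ⟨h1, h2⟩
    refine ⟨h1, fun y hy => ?_⟩
    have := hPle y (by rw [hP]; exact hy)
    linarith
  · rintro ⟨h1, h2⟩
    refine ⟨h1, le_antisymm (hPle x (by rw [hP]; exact h1)) ?_⟩
    have := h2 (fpt m i i) (by rw [← hP] at *; exact hiiP)
    linarith [hiiM]
end
end
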